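/- lim_{X\to\infty} #\mathcal{E}(X)/X^{5/6} = 4 / (\zeta(10) \cdot 4^{1/3} \cdot 27^{1/2}). -/

import Mathlib

/-!
The pairs of height at most `X` are those with `|A| ≤ a = ⌊(X/4)^{1/3}⌋` and
`|B| ≤ b = ⌊(X/27)^{1/2}⌋`. The `d` with `d⁴ ∣ A` and `d⁶ ∣ B` are closed under `lcm`, hence are
the divisors of a single `g`, so Möbius inversion counts the nonzero pairs of the box without a
prime `p` with `p⁴ ∣ A`, `p⁶ ∣ B` as `∑_d μ(d) ((2⌊a/d⁴⌋ + 1)(2⌊b/d⁶⌋ + 1) - 1)`. Normalized by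
`(X/4)^{1/3} (X/27)^{1/2} = X^{5/6} / (4^{1/3} 27^{1/2})`, the `d`-th term tends to `4 μ(d)/d¹⁰`
and is dominated by a summable sequence, so the normalized count tends to
`4 ∑ μ(d)/d¹⁰ = 4/ζ(10)`. Pairs with `4A³ + 27B² = 0` are determined by `A` and the sign of `B`,
so there are only `O(a) = o(X^{5/6})` of them.
-/

open Filter Topology

noncomputable section

def EllipticPairs : Set (ℤ × ℤ) :=
  {AB | 4 * AB.1 ^ 3 + 27 * AB.2 ^ 2 ≠ 0 ∧
    ∀ p : ℕ, p.Prime → ¬ ((p : ℤ) ^ 4 ∣ AB.1 ∧ (p : ℤ) ^ 6 ∣ AB.2)}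

def EllipticPairsLE (X : ℝ) : Set (ℤ × ℤ) :=
  {AB ∈ EllipticPairs | ((4 * |AB.1| ^ 3 : ℤ) : ℝ) ≤ X ∧ ((27 * AB.2 ^ 2 : ℤ) : ℝ) ≤ X}

open Finset
open scoped ArithmeticFunction.Moebius

theorem Nat.lcm_pow_dvd {d e n k : ℕ} (hd : d ^ k ∣ n) (he : e ^ k ∣ n) :
    Nat.lcm d e ^ k ∣ n := by
  rcases eq_or_ne n 0 with rfl | hn
  · exact dvd_zero _
  rcases eq_or_ne k 0 with rfl | hk
  · simp
  have hd0 : d ≠ 0 := by rintro rfl; simp_all [zero_pow hk]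
  have he0 : e ≠ 0 := by rintro rfl; simp_all [zero_pow hk]
  rw [← Nat.factorization_le_iff_dvd (by positivity) hn] at hd he ⊢
  intro p
  have hdp := hd p
  have hep := he p
  simp only [Nat.factorization_pow, Nat.factorization_lcm hd0 he0, Finsupp.smul_apply,
    Finsupp.sup_apply, smul_eq_mul] at hdp hep ⊢
  rcases max_choice (d.factorization p) (e.factorization p) with h | h <;> rw [h] <;> assumption

def PowDvdPair (k l d : ℕ) (AB : ℤ × ℤ) : Prop :=
  (d : ℤ) ^ k ∣ AB.1 ∧ (d : ℤ) ^ l ∣ AB.2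

instance (k l d : ℕ) : DecidablePred (PowDvdPair k l d) :=
  fun _ => inferInstanceAs (Decidable (_ ∧ _))

def IsPowFreePair (k l : ℕ) (AB : ℤ × ℤ) : Prop :=
  ∀ p : ℕ, p.Prime → ¬PowDvdPair k l p AB

theorem not_isPowFreePair_zero (k l : ℕ) : ¬IsPowFreePair k l 0 :=
  fun h => h 2 Nat.prime_two ⟨dvd_zero _, dvd_zero _⟩

theorem exists_powDvdPair_iff_dvd {k l : ℕ} (hk : k ≠ 0) (hl : l ≠ 0) {A B : ℤ}
    (hAB : (A, B) ≠ 0) :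
    ∃ g ≠ 0, g ≤ A.natAbs + B.natAbs ∧ ∀ d : ℕ, PowDvdPair k l d (A, B) ↔ d ∣ g := by
  simp only [PowDvdPair, ← Nat.cast_pow, Int.natCast_dvd]
  set a := A.natAbs
  set b := B.natAbs
  have hab : a ≠ 0 ∨ b ≠ 0 := by
    by_contra! h
    exact hAB (Prod.ext (Int.natAbs_eq_zero.1 h.1) (Int.natAbs_eq_zero.1 h.2))
  let P d := d ^ k ∣ a ∧ d ^ l ∣ b
  have hP_ne_zero : ∀ d, P d → d ≠ 0 := by
    rintro d ⟨hda, hdb⟩ rfl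
    simp_all [zero_pow hk, zero_pow hl]
  have hP_le : ∀ d, P d → d ≤ a + b := by
    rintro d ⟨hda, hdb⟩
    rcases hab with ha | hb
    · have := (Nat.le_self_pow hk d).trans (Nat.le_of_dvd (Nat.pos_of_ne_zero ha) hda); omega
    · have := (Nat.le_self_pow hl d).trans (Nat.le_of_dvd (Nat.pos_of_ne_zero hb) hdb); omega
  have hP_one : P 1 := by simp [P]
  -- The admissible `d` are closed under `lcm`, so the largest one is a multiple of all of them.
  set g := Nat.findGreatest P (a + b)
  have hPg : P g := Nat.findGreatest_spec (hP_le 1 hP_one) hP_one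
  refine ⟨g, hP_ne_zero g hPg, Nat.findGreatest_le _, fun d => ⟨fun hPd => ?_, fun hdg => ?_⟩⟩
  · have hPlcm : P (d.lcm g) := ⟨Nat.lcm_pow_dvd hPd.1 hPg.1, Nat.lcm_pow_dvd hPd.2 hPg.2⟩
    have hle : d.lcm g ≤ g := Nat.le_findGreatest (hP_le _ hPlcm) hPlcm
    have hge : g ≤ d.lcm g :=
      Nat.le_of_dvd (Nat.pos_of_ne_zero (hP_ne_zero _ hPlcm)) (Nat.dvd_lcm_right d g)
    exact le_antisymm hle hge ▸ Nat.dvd_lcm_left d g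
  · exact ⟨(pow_dvd_pow_of_dvd hdg k).trans hPg.1, (pow_dvd_pow_of_dvd hdg l).trans hPg.2⟩

open scoped Classical in
theorem sum_moebius_filter_powDvdPair {k l : ℕ} (hk : k ≠ 0) (hl : l ≠ 0) {A B : ℤ}
    (hAB : (A, B) ≠ 0) {N : ℕ} (hN : A.natAbs + B.natAbs ≤ N) :
    ∑ d ∈ range (N + 1) with PowDvdPair k l d (A, B), (μ d : ℤ)
      = if IsPowFreePair k l (A, B) then 1 else 0 := by
  obtain ⟨g, hg0, hgN, hg⟩ := exists_powDvdPair_iff_dvd hk hl hAB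
  have hfilter : {d ∈ range (N + 1) | PowDvdPair k l d (A, B)} = g.divisors := by
    ext d
    rw [mem_filter, mem_range, hg, Nat.mem_divisors, and_iff_left hg0]
    refine ⟨And.right, fun hdg => ⟨?_, hdg⟩⟩
    have := Nat.le_of_dvd (Nat.pos_of_ne_zero hg0) hdg
    omega
  have hpowfree : IsPowFreePair k l (A, B) ↔ g = 1 := by
    simp only [IsPowFreePair, hg, Nat.eq_one_iff_not_exists_prime_dvd]
  have hmoebius : ∑ d ∈ g.divisors, (μ d : ℤ) = if g = 1 then 1 else 0 := by
    simpa [ArithmeticFunction.one_apply] using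
      (ArithmeticFunction.coe_mul_zeta_apply (f := μ) (x := g)).symm.trans
        (congrArg (· g) ArithmeticFunction.moebius_mul_coe_zeta)
  rw [hfilter, hmoebius, if_congr hpowfree.symm rfl rfl]

theorem tsum_moebius_div_pow_mul_tsum_inv_pow {s : ℕ} (hs : 1 < s) :
    (∑' n : ℕ, μ n / (n : ℝ) ^ s) * ∑' m : ℕ, ((m : ℝ) + 1) ^ (-(s : ℤ)) = 1 := by
  have hs' : 1 < (s : ℂ).re := by simpa using hs
  have hμ : LSeries (fun n => (μ n : ℂ)) s = ((∑' n : ℕ, μ n / (n : ℝ) ^ s : ℝ) : ℂ) := by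
    rw [LSeries, Complex.ofReal_tsum]
    refine tsum_congr fun n => ?_
    rcases eq_or_ne n 0 with rfl | hn
    · simp
    · simp [LSeries.term_of_ne_zero hn]
  have hζ : riemannZeta s = ((∑' m : ℕ, ((m : ℝ) + 1) ^ (-(s : ℤ)) : ℝ) : ℂ) := by
    rw [zeta_eq_tsum_one_div_nat_add_one_cpow hs', Complex.ofReal_tsum]
    refine tsum_congr fun m => ?_
    simp [zpow_neg]
  have key := LSeries_one_mul_Lseries_moebius hs'
  rw [LSeries_one_eq_riemannZeta hs', hζ, hμ, ← Complex.ofReal_mul, mul_comm] at key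
  exact_mod_cast key

def intBox (a b : ℕ) : Finset (ℤ × ℤ) := Icc (-(a : ℤ)) a ×ˢ Icc (-(b : ℤ)) b

theorem mem_intBox {a b : ℕ} {AB : ℤ × ℤ} :
    AB ∈ intBox a b ↔ AB.1.natAbs ≤ a ∧ AB.2.natAbs ≤ b := by
  simp only [intBox, mem_product, mem_Icc]
  omega

theorem card_filter_dvd_Icc_neg_self (a : ℕ) {m : ℕ} (hm : m ≠ 0) :
    #{A ∈ Icc (-(a : ℤ)) a | (m : ℤ) ∣ A} = 2 * (a / m) + 1 := by
  have hm' : (0 : ℤ) < m := by positivity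
  have himage : {A ∈ Icc (-(a : ℤ)) a | (m : ℤ) ∣ A}
      = (Icc (-((a / m : ℕ) : ℤ)) (a / m : ℕ)).image ((m : ℤ) * ·) := by
    ext A
    simp only [mem_filter, mem_Icc, mem_image]
    constructor
    · rintro ⟨hA, t, rfl⟩
      refine ⟨t, ?_, rfl⟩
      push_cast
      rw [neg_le, Int.le_ediv_iff_mul_le hm', Int.le_ediv_iff_mul_le hm']
      constructor <;> linarith
    · rintro ⟨t, ht, rfl⟩
      push_cast at ht
      rw [neg_le, Int.le_ediv_iff_mul_le hm', Int.le_ediv_iff_mul_le hm'] at ht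
      exact ⟨⟨by linarith, by linarith⟩, dvd_mul_right _ _⟩
  rw [himage, card_image_of_injective _ (mul_right_injective₀ hm'.ne'), Int.card_Icc]
  omega

theorem card_filter_powDvdPair_intBox (k l a b : ℕ) {d : ℕ} (hd : d ≠ 0) :
    #{AB ∈ intBox a b | PowDvdPair k l d AB} = (2 * (a / d ^ k) + 1) * (2 * (b / d ^ l) + 1) := by
  have hprod : {AB ∈ intBox a b | PowDvdPair k l d AB}
      = {A ∈ Icc (-(a : ℤ)) a | ((d ^ k : ℕ) : ℤ) ∣ A}
          ×ˢ {B ∈ Icc (-(b : ℤ)) b | ((d ^ l : ℕ) : ℤ) ∣ B} := by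
    ext AB
    simp only [mem_filter, mem_product, intBox]
    simp only [PowDvdPair, Nat.cast_pow]
    tauto
  rw [hprod, card_product, card_filter_dvd_Icc_neg_self a (pow_ne_zero k hd),
    card_filter_dvd_Icc_neg_self b (pow_ne_zero l hd)]

open scoped Classical in
theorem card_filter_isPowFreePair_intBox {k l : ℕ} (hk : k ≠ 0) (hl : l ≠ 0) (a b : ℕ) :
    (#{AB ∈ intBox a b | IsPowFreePair k l AB} : ℤ)
      = ∑ d ∈ range (a + b + 1),
          μ d * (((2 * (a / d ^ k) + 1) * (2 * (b / d ^ l) + 1) : ℕ) - 1 : ℤ) := by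
  -- `(0, 0)` is divisible by every `d ^ k`; it is not pow-free, and it is removed before sieving.
  have hzero : (0 : ℤ × ℤ) ∈ intBox a b := mem_intBox.2 (by simp)
  calc (#{AB ∈ intBox a b | IsPowFreePair k l AB} : ℤ)
      = ∑ AB ∈ (intBox a b).erase 0, if IsPowFreePair k l AB then 1 else 0 := by
        rw [card_filter]
        push_cast
        exact (sum_erase (intBox a b) (f := fun AB => if IsPowFreePair k l AB then (1 : ℤ) else 0)
          (if_neg (not_isPowFreePair_zero k l))).symm
    _ = ∑ AB ∈ (intBox a b).erase 0,
          ∑ d ∈ range (a + b + 1) with PowDvdPair k l d AB, (μ d : ℤ) := by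
        refine sum_congr rfl fun AB hAB => ?_
        obtain ⟨hAB0, hAB⟩ := mem_erase.1 hAB
        rw [sum_moebius_filter_powDvdPair hk hl hAB0]
        have := mem_intBox.1 hAB
        omega
    _ = ∑ d ∈ range (a + b + 1), μ d * #{AB ∈ (intBox a b).erase 0 | PowDvdPair k l d AB} := by
        simp only [sum_filter]
        rw [sum_comm]
        simp [sum_ite, mul_comm]
    _ = _ := by
        refine sum_congr rfl fun d _ => ?_
        rcases eq_or_ne d 0 with rfl | hd
        · simp
        have hcard := card_erase_add_one (s := {AB ∈ intBox a b | PowDvdPair k l d AB})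
          (mem_filter.2 ⟨hzero, dvd_zero _, dvd_zero _⟩)
        rw [card_filter_powDvdPair_intBox k l a b hd] at hcard
        rw [filter_erase, ← hcard]
        push_cast
        ring

theorem card_filter_disc_eq_zero_intBox_le (a b : ℕ) :
    #{AB ∈ intBox a b | 4 * AB.1 ^ 3 + 27 * AB.2 ^ 2 = 0} ≤ 2 * (2 * a + 1) := by
  -- `27 B² = -4 A³`, so `B` is determined by `A` and the sign of `B`.
  calc #{AB ∈ intBox a b | 4 * AB.1 ^ 3 + 27 * AB.2 ^ 2 = 0}
      ≤ #(Icc (-(a : ℤ)) a ×ˢ (univ : Finset Bool)) := by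
        refine card_le_card_of_injOn (fun AB => (AB.1, decide (0 ≤ AB.2))) ?_ ?_
        · intro AB hAB
          simp only [mem_coe, mem_filter, intBox, mem_product] at hAB ⊢
          exact ⟨hAB.1.1, mem_univ _⟩
        · rintro ⟨A, B⟩ hAB ⟨A', B'⟩ hAB' hfst
          simp only [mem_coe, mem_filter] at hAB hAB'
          simp only [Prod.mk.injEq, decide_eq_decide] at hfst ⊢
          obtain ⟨rfl, hsign⟩ := hfst
          have hsq : B ^ 2 = B' ^ 2 := by linarith [hAB.2, hAB'.2]
          rcases sq_eq_sq_iff_eq_or_eq_neg.1 hsq with h | h <;> omega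
    _ = 2 * (2 * a + 1) := by simp [Int.card_Icc]; omega

theorem mem_ellipticPairs {AB : ℤ × ℤ} :
    AB ∈ EllipticPairs ↔ 4 * AB.1 ^ 3 + 27 * AB.2 ^ 2 ≠ 0 ∧ IsPowFreePair 4 6 AB :=
  Iff.rfl

open scoped Classical in
theorem card_filter_ellipticPairs_le (S : Finset (ℤ × ℤ)) :
    #{AB ∈ S | AB ∈ EllipticPairs} ≤ #{AB ∈ S | IsPowFreePair 4 6 AB} :=
  card_le_card (monotone_filter_right S fun _ _ h => (mem_ellipticPairs.1 h).2)

open scoped Classical in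
theorem card_filter_isPowFreePair_le (S : Finset (ℤ × ℤ)) :
    #{AB ∈ S | IsPowFreePair 4 6 AB}
      ≤ #{AB ∈ S | AB ∈ EllipticPairs} + #{AB ∈ S | 4 * AB.1 ^ 3 + 27 * AB.2 ^ 2 = 0} := by
  refine (card_le_card fun AB hAB => ?_).trans (card_union_le _ _)
  rw [mem_filter] at hAB
  rw [mem_union, mem_filter, mem_filter, mem_ellipticPairs]
  by_cases hdisc : 4 * AB.1 ^ 3 + 27 * AB.2 ^ 2 = 0
  · exact Or.inr ⟨hAB.1, hdisc⟩
  · exact Or.inl ⟨hAB.1, hdisc, hAB.2⟩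

section Asymptotics

variable {ι : Type*} {F : Filter ι} {y z : ι → ℝ}

theorem tendsto_two_mul_floor_div_add_one_div (hy : Tendsto y F atTop) {c : ℝ} (hc : 0 < c) :
    Tendsto (fun i => (2 * ⌊y i / c⌋₊ + 1 : ℝ) / y i) F (𝓝 (2 / c)) := by
  have hfloor := (tendsto_nat_floor_div_atTop (R := ℝ)).comp (hy.atTop_div_const hc)
  have hlim := (hfloor.const_mul (2 / c)).add hy.inv_tendsto_atTop
  rw [mul_one, add_zero] at hlim
  refine hlim.congr' ?_
  filter_upwards [hy.eventually_gt_atTop 0] with i hi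
  simp only [Function.comp_apply, Pi.inv_apply]
  field_simp

def sieveTerm (k l : ℕ) (y z : ℝ) (d : ℕ) : ℝ :=
  μ d * ((2 * ⌊y / d ^ k⌋₊ + 1) * (2 * ⌊z / d ^ l⌋₊ + 1) - 1) / (y * z)

theorem tendsto_sieveTerm (hy : Tendsto y F atTop) (hz : Tendsto z F atTop) (k l d : ℕ) :
    Tendsto (fun i => sieveTerm k l (y i) (z i) d) F (𝓝 (4 * (μ d / (d : ℝ) ^ (k + l)))) := by
  rcases eq_or_ne d 0 with rfl | hd
  · simpa [sieveTerm] using tendsto_const_nhds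
  have hpos : ∀ n : ℕ, (0 : ℝ) < (d : ℝ) ^ n := fun n => by positivity
  have hlim := ((tendsto_two_mul_floor_div_add_one_div hy (hpos k)).mul
    (tendsto_two_mul_floor_div_add_one_div hz (hpos l))).sub
    (hy.inv_tendsto_atTop.mul hz.inv_tendsto_atTop) |>.const_mul (μ d : ℝ)
  convert hlim using 1
  · ext i
    simp only [sieveTerm, Pi.inv_apply]
    ring
  · rw [mul_zero, sub_zero, pow_add]
    congr 1
    field_simp
    ring

theorem abs_sieveTerm_le {k l : ℕ} {y z : ℝ} (hy : 1 ≤ y) (hz : 1 ≤ z) (d : ℕ) :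
    |sieveTerm k l y z d| ≤ 4 / (d : ℝ) ^ (k + l) + 2 / (d : ℝ) ^ k + 2 / (d : ℝ) ^ l := by
  rcases eq_or_ne d 0 with rfl | hd
  · simp only [sieveTerm, ArithmeticFunction.map_zero, Int.cast_zero, zero_mul, zero_div,
      abs_zero]
    positivity
  have hpos : ∀ n : ℕ, (0 : ℝ) < (d : ℝ) ^ n := fun n => by positivity
  have hexpand (u v : ℝ) : ((2 * u + 1) * (2 * v + 1) - 1) / (y * z)
      = 4 * (u / y) * (v / z) + 2 * (u / y) * (1 / z) + 2 * (v / z) * (1 / y) := by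
    ring
  set u : ℝ := (⌊y / d ^ k⌋₊ : ℝ)
  set v : ℝ := (⌊z / d ^ l⌋₊ : ℝ)
  have hu : u / y ≤ 1 / (d : ℝ) ^ k := by
    rw [div_le_iff₀ (by linarith), one_div_mul_eq_div]
    exact Nat.floor_le (by positivity)
  have hv : v / z ≤ 1 / (d : ℝ) ^ l := by
    rw [div_le_iff₀ (by linarith), one_div_mul_eq_div]
    exact Nat.floor_le (by positivity)
  have hy' : 1 / y ≤ 1 := by rw [div_le_one (by linarith)]; exact hy
  have hz' : 1 / z ≤ 1 := by rw [div_le_one (by linarith)]; exact hz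
  have hμ : |(μ d : ℝ)| ≤ 1 := by exact_mod_cast ArithmeticFunction.abs_moebius_le_one
  have hnum : 0 ≤ (2 * u + 1) * (2 * v + 1) - 1 := by
    have hu0 : 0 ≤ u := Nat.cast_nonneg _
    have hv0 : 0 ≤ v := Nat.cast_nonneg _
    nlinarith
  calc |sieveTerm k l y z d|
      = |(μ d : ℝ)| * (4 * (u / y) * (v / z) + 2 * (u / y) * (1 / z) + 2 * (v / z) * (1 / y)) := by
        rw [sieveTerm, mul_div_assoc, abs_mul, ← hexpand,
          abs_of_nonneg (div_nonneg hnum (by positivity))]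
    _ ≤ 1 * (4 * (1 / (d : ℝ) ^ k) * (1 / (d : ℝ) ^ l) + 2 * (1 / (d : ℝ) ^ k) * 1
          + 2 * (1 / (d : ℝ) ^ l) * 1) := by gcongr
    _ = _ := by
      rw [pow_add]
      field_simp

theorem tendsto_tsum_sieveTerm {k l : ℕ} (hk : 2 ≤ k) (hl : 2 ≤ l)
    (hy : Tendsto y F atTop) (hz : Tendsto z F atTop) :
    Tendsto (fun i => ∑' d, sieveTerm k l (y i) (z i) d) F
      (𝓝 (4 * ∑' d : ℕ, μ d / (d : ℝ) ^ (k + l))) := by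
  have hsummable (n : ℕ) (hn : 2 ≤ n) (c : ℝ) : Summable (fun d : ℕ => c / (d : ℝ) ^ n) := by
    exact ((Real.summable_one_div_nat_pow.2 hn).mul_left c).congr fun d => mul_one_div _ _
  rw [← tsum_mul_left]
  refine tendsto_tsum_of_dominated_convergence
    (((hsummable (k + l) (by omega) 4).add (hsummable k hk 2)).add (hsummable l hl 2))
    (tendsto_sieveTerm hy hz k l) ?_
  filter_upwards [hy.eventually_ge_atTop 1, hz.eventually_ge_atTop 1] with i hyi hzi d
  exact abs_sieveTerm_le hyi hzi d

open scoped Classical in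
theorem card_filter_isPowFreePair_intBox_div_eq_tsum {k l : ℕ} (hk : k ≠ 0) (hl : l ≠ 0)
    (y z : ℝ) :
    (#{AB ∈ intBox ⌊y⌋₊ ⌊z⌋₊ | IsPowFreePair k l AB} : ℝ) / (y * z)
      = ∑' d, sieveTerm k l y z d := by
  have hfloor (d n : ℕ) (w : ℝ) : ⌊w / (d : ℝ) ^ n⌋₊ = ⌊w⌋₊ / d ^ n := by
    rw [← Nat.cast_pow, Nat.floor_div_natCast]
  rw [tsum_eq_sum (s := range (⌊y⌋₊ + ⌊z⌋₊ + 1)) fun d hd => ?_]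
  · rw [← Int.cast_natCast, card_filter_isPowFreePair_intBox hk hl]
    rw [Int.cast_sum, sum_div]
    refine sum_congr rfl fun d _ => ?_
    rw [sieveTerm, hfloor, hfloor]
    simp only [Int.cast_mul, Int.cast_sub, Int.cast_natCast, Int.cast_one]
    push_cast
    ring
  · have hd : ⌊y⌋₊ + ⌊z⌋₊ < d := by simpa using hd
    have hd0 : d ≠ 0 := by omega
    rw [sieveTerm, hfloor, hfloor,
      Nat.div_eq_of_lt ((show ⌊y⌋₊ < d by omega).trans_le (Nat.le_self_pow hk d)),
      Nat.div_eq_of_lt ((show ⌊z⌋₊ < d by omega).trans_le (Nat.le_self_pow hl d))]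
    simp

theorem tendsto_card_filter_disc_eq_zero_intBox_div (hy : Tendsto y F atTop)
    (hz : Tendsto z F atTop) :
    Tendsto (fun i => (#{AB ∈ intBox ⌊y i⌋₊ ⌊z i⌋₊ | 4 * AB.1 ^ 3 + 27 * AB.2 ^ 2 = 0} : ℝ)
      / (y i * z i)) F (𝓝 0) := by
  have hbound := ((tendsto_two_mul_floor_div_add_one_div hy one_pos).mul
    hz.inv_tendsto_atTop).const_mul 2
  rw [mul_zero, mul_zero] at hbound
  refine squeeze_zero' ?_ ?_ hbound
  · filter_upwards [hy.eventually_gt_atTop 0, hz.eventually_gt_atTop 0] with i hyi hzi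
    positivity
  · filter_upwards [hy.eventually_gt_atTop 0, hz.eventually_gt_atTop 0] with i hyi hzi
    have hcard : (#{AB ∈ intBox ⌊y i⌋₊ ⌊z i⌋₊ | 4 * AB.1 ^ 3 + 27 * AB.2 ^ 2 = 0} : ℝ)
        ≤ 2 * (2 * ⌊y i⌋₊ + 1) := by
      exact_mod_cast card_filter_disc_eq_zero_intBox_le _ _
    calc _ ≤ (2 * (2 * ⌊y i⌋₊ + 1) : ℝ) / (y i * z i) := by gcongr
      _ = _ := by simp only [div_one, Pi.inv_apply]; field_simp

open scoped Classical in
theorem tendsto_card_filter_ellipticPairs_intBox_div (hy : Tendsto y F atTop)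
    (hz : Tendsto z F atTop) :
    Tendsto (fun i => (#{AB ∈ intBox ⌊y i⌋₊ ⌊z i⌋₊ | AB ∈ EllipticPairs} : ℝ) / (y i * z i)) F
      (𝓝 (4 * ∑' d : ℕ, μ d / (d : ℝ) ^ 10)) := by
  have hfree : Tendsto (fun i => (#{AB ∈ intBox ⌊y i⌋₊ ⌊z i⌋₊ | IsPowFreePair 4 6 AB} : ℝ)
      / (y i * z i)) F (𝓝 (4 * ∑' d : ℕ, μ d / (d : ℝ) ^ 10)) := by
    simp only [card_filter_isPowFreePair_intBox_div_eq_tsum (by norm_num : 4 ≠ 0)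
      (by norm_num : 6 ≠ 0)]
    exact tendsto_tsum_sieveTerm (by norm_num) (by norm_num) hy hz
  have hlower := hfree.sub (tendsto_card_filter_disc_eq_zero_intBox_div hy hz)
  rw [sub_zero] at hlower
  refine tendsto_of_tendsto_of_tendsto_of_le_of_le' hlower hfree ?_ ?_ <;>
    filter_upwards [hy.eventually_gt_atTop 0, hz.eventually_gt_atTop 0] with i hyi hzi
  · rw [← sub_div]
    gcongr
    rw [sub_le_iff_le_add]
    exact_mod_cast card_filter_isPowFreePair_le _
  · gcongr ?_ / _
    exact_mod_cast card_filter_ellipticPairs_le _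

end Asymptotics

theorem natAbs_le_floor_rpow_iff {n : ℕ} (hn : n ≠ 0) {x : ℝ} (hx : 0 ≤ x) (A : ℤ) :
    A.natAbs ≤ ⌊x ^ ((1 : ℝ) / n)⌋₊ ↔ |(A : ℝ)| ^ n ≤ x := by
  rw [Nat.le_floor_iff (by positivity), Nat.cast_natAbs, Int.cast_abs, one_div,
    Real.le_rpow_inv_iff_of_pos (abs_nonneg _) hx (by positivity), Real.rpow_natCast]

open scoped Classical in
theorem ellipticPairsLE_eq {X : ℝ} (hX : 0 ≤ X) :
    EllipticPairsLE X = ↑{AB ∈ intBox ⌊(X / 4) ^ ((1 : ℝ) / 3)⌋₊ ⌊(X / 27) ^ ((1 : ℝ) / 2)⌋₊ |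
      AB ∈ EllipticPairs} := by
  ext ⟨A, B⟩
  have hA := natAbs_le_floor_rpow_iff (n := 3) (by norm_num) (by positivity : 0 ≤ X / 4) A
  have hB := natAbs_le_floor_rpow_iff (n := 2) (by norm_num) (by positivity : 0 ≤ X / 27) B
  push_cast at hA hB
  rw [sq_abs] at hB
  simp only [EllipticPairsLE, coe_filter, mem_intBox, hA, hB, Set.mem_ofPred_eq]
  push_cast
  constructor
  · rintro ⟨h, hA, hB⟩
    exact ⟨⟨by linarith, by linarith⟩, h⟩
  · rintro ⟨⟨hA, hB⟩, h⟩
    exact ⟨h, by linarith, by linarith⟩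

/-- `#ℰ(X)/X^{5/6} → 4/(ζ(10) ⬝ 4^{1/3} ⬝ 27^{1/2})` as `X → ∞`. -/
theorem ellipticPairs_count_asymptotic :
    Tendsto (fun X : ℝ => ((EllipticPairsLE X).ncard : ℝ) / X ^ ((5 : ℝ) / 6)) atTop
      (𝓝 (4 / ((∑' m : ℕ, ((m : ℝ) + 1) ^ (-10 : ℤ)) * (4 : ℝ) ^ ((1 : ℝ) / 3)
          * (27 : ℝ) ^ ((1 : ℝ) / 2)))) := by
  have hy : Tendsto (fun X : ℝ => (X / 4) ^ ((1 : ℝ) / 3)) atTop atTop :=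
    (tendsto_rpow_atTop (by norm_num)).comp (tendsto_id.atTop_div_const (by norm_num))
  have hz : Tendsto (fun X : ℝ => (X / 27) ^ ((1 : ℝ) / 2)) atTop atTop :=
    (tendsto_rpow_atTop (by norm_num)).comp (tendsto_id.atTop_div_const (by norm_num))
  have hζ := tsum_moebius_div_pow_mul_tsum_inv_pow (s := 10) (by norm_num)
  push_cast at hζ
  have hlim := (tendsto_card_filter_ellipticPairs_intBox_div hy hz).div_const
    ((4 : ℝ) ^ ((1 : ℝ) / 3) * (27 : ℝ) ^ ((1 : ℝ) / 2))
  rw [eq_inv_of_mul_eq_one_left hζ] at hlim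
  convert hlim.congr' ?_ using 2
  · ring
  filter_upwards [eventually_gt_atTop 0] with X hX
  rw [ellipticPairsLE_eq hX.le, Set.ncard_coe_finset, Real.div_rpow hX.le (by norm_num),
    Real.div_rpow hX.le (by norm_num), div_mul_div_comm, ← Real.rpow_add hX]
  norm_num
  field_simp
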